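/- arXiv:1205.5625 — 7 statements merged into one kernel-verified Lean document; each statement's English description precedes it below -/
import Mathlib

section
/- Let X = [0,1) ∪ {x,y} be the poset extending the usual order on [0,1) by declaring x and y both greater than every element of [0,1) and incomparable with each other. Then X has a smallest element, every down-set I_τ = {σ : σ ≤ τ} is order-isomorphic to a real interval, but the subset {x,y} has no infimum in X. -/
/-!
Send `of r` to `r` and both `x` and `y` to `1`. On each down-set, which is a chain, this height
map is an order embedding onto `[0, height τ]`. Every element of `[0,1)` lies below both `x` and
`y`, so the lower bounds of `{x, y}` form a copy of `[0,1)`, which has no greatest element.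
-/

/-- The poset `X = [0,1) ∪ {x,y}`. -/
inductive TreeEx where
  | of (r : Set.Ico (0:ℝ) 1)
  | x
  | y

namespace TreeEx

/-- The order on `X`: the usual order on `[0,1)`, with `x` and `y` above every
element of `[0,1)` and incomparable with each other. -/
def le : TreeEx → TreeEx → Prop
  | of r, of s => (r : ℝ) ≤ (s : ℝ)
  | of _, x => True
  | of _, y => True
  | x, x => True
  | y, y => True
  | _, _ => False

instance : PartialOrder TreeEx where
  le := le
  le_refl t := by cases t <;> simp [le]
  le_trans a b c hab hbc := by
    cases a <;> cases b <;> cases c <;> simp_all [le] <;> exact le_trans hab hbc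
  le_antisymm a b hab hba := by
    cases a <;> cases b <;> simp_all [le]
    exact Subtype.ext (le_antisymm hab hba)

end TreeEx

open Set

namespace TreeEx

def height : TreeEx → ℝ
  | of r => r
  | x => 1
  | y => 1

lemma height_nonneg (t : TreeEx) : 0 ≤ height t := by
  cases t with
  | of r => exact r.2.1
  | x | y => exact zero_le_one

lemma of_le_iff {r : Ico (0 : ℝ) 1} {t : TreeEx} : of r ≤ t ↔ (r : ℝ) ≤ height t := by
  cases t with
  | of s => exact Iff.rfl
  | x | y => exact iff_of_true trivial r.2.2.le

lemma height_le_height_iff {σ σ' τ : TreeEx} (hσ : σ ≤ τ) (hσ' : σ' ≤ τ) :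
    height σ ≤ height σ' ↔ σ ≤ σ' := by
  cases σ with
  | of r => exact of_le_iff.symm
  | x | y =>
    cases σ' with
    | of s => exact iff_of_false (not_le.2 s.2.2) fun h => h
    | x | y =>
      cases τ <;> first | exact iff_of_true le_rfl le_rfl | exact hσ.elim | exact hσ'.elim

lemma exists_le_height_eq {τ : TreeEx} {v : ℝ} (hv : v ∈ Icc 0 (height τ)) :
    ∃ σ ≤ τ, height σ = v := by
  rcases hv.2.eq_or_lt with rfl | hlt
  · exact ⟨τ, le_rfl, rfl⟩
  · have hv1 : v < 1 := by
      cases τ with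
      | of r => exact hlt.trans r.2.2
      | x | y => exact hlt
    exact ⟨of ⟨v, hv.1, hv1⟩, of_le_iff.2 hv.2, rfl⟩

noncomputable def iicOrderIsoIcc (τ : TreeEx) : {σ : TreeEx // σ ≤ τ} ≃o Icc (0 : ℝ) (height τ) :=
  OrderIso.ofSurjective
    (OrderEmbedding.ofMapLEIff
      (fun σ => ⟨height σ, height_nonneg σ, (height_le_height_iff σ.2 le_rfl).2 σ.2⟩)
      fun σ σ' => height_le_height_iff σ.2 σ'.2)
    fun v => by
      obtain ⟨σ, hσ, hv⟩ := exists_le_height_eq v.2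
      exact ⟨⟨σ, hσ⟩, Subtype.ext hv⟩

lemma mem_lowerBounds_x_y_iff {t : TreeEx} : t ∈ lowerBounds {x, y} ↔ ∃ r, t = of r := by
  refine ⟨fun ht => ?_, ?_⟩
  · have hx : t ≤ x := ht (mem_insert _ _)
    have hy : t ≤ y := ht (mem_insert_of_mem _ rfl)
    cases t with
    | of r => exact ⟨r, rfl⟩
    | x => exact hy.elim
    | y => exact hx.elim
  · rintro ⟨r, rfl⟩ s (rfl | rfl) <;> trivial

lemma not_isGLB_x_y (t : TreeEx) : ¬ IsGLB {x, y} t := by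
  rintro ⟨hlb, hglb⟩
  obtain ⟨r, rfl⟩ := mem_lowerBounds_x_y_iff.1 hlb
  obtain ⟨m, hrm, hm1⟩ := exists_between r.2.2
  have hm : of ⟨m, r.2.1.trans hrm.le, hm1⟩ ∈ lowerBounds {x, y} :=
    mem_lowerBounds_x_y_iff.2 ⟨_, rfl⟩
  exact (of_le_iff.1 (hglb hm)).not_gt hrm

end TreeEx

/-- `X = [0,1) ∪ {x,y}` has a smallest element, every down-set is
order-isomorphic to a real interval, but `{x,y}` has no infimum in `X`. -/
theorem treeEx_no_infimum :
    (∃ τ₀ : TreeEx, ∀ t, τ₀ ≤ t) ∧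
    (∀ τ : TreeEx, ∃ s : Set ℝ, s.OrdConnected ∧
      Nonempty ({σ : TreeEx // σ ≤ τ} ≃o s)) ∧
    ¬ ∃ t : TreeEx, IsGLB {TreeEx.x, TreeEx.y} t :=
  ⟨⟨.of ⟨0, le_rfl, one_pos⟩, fun t => TreeEx.of_le_iff.2 (TreeEx.height_nonneg t)⟩,
    fun τ => ⟨_, ordConnected_Icc, ⟨TreeEx.iicOrderIsoIcc τ⟩⟩,
    fun ⟨t, ht⟩ => TreeEx.not_isGLB_x_y t ht⟩
end

section
/- Let (T, ≤) be a poset with a smallest element τ₀ such that every set I_τ = {σ ∈ T : σ ≤ τ} is order-isomorphic to a real interval. If every pair {τ,σ} ⊆ T has an infimum in T, then every non-empty subset S ⊆ T has an infimum in T. -/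
/-!
Fix `s₀ ∈ S`. Every lower bound of `S` lies below `s₀`, and the down-set of `s₀` is order-isomorphic
to an interval of `ℝ`, so the (nonempty, since `τ₀` is one) set of lower bounds has a supremum `t`
inside that down-set. Pairwise infima make `t` a supremum in all of `T`: for an upper bound `u` of
the lower bounds, `u ⊓ s₀` is again one and lies in the down-set. A supremum of the lower bounds of
`S` is an infimum of `S`.
-/

theorem Set.OrdConnected.exists_isLUB {β : Type*} [ConditionallyCompleteLinearOrder β]
    {s : Set β} (hs : s.OrdConnected) {A : Set s} (hne : A.Nonempty) (hbdd : BddAbove A) :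
    ∃ a, IsLUB A a := by
  have := hs
  have : Inhabited s := ⟨hne.some⟩
  exact ⟨sSup A, isLUB_csSup hne hbdd⟩

theorem OrderIso.exists_isLUB_of_ordConnected {α β : Type*} [Preorder α]
    [ConditionallyCompleteLinearOrder β] {s : Set β} (hs : s.OrdConnected) (e : α ≃o s)
    {A : Set α} (hne : A.Nonempty) (hbdd : BddAbove A) : ∃ a, IsLUB A a := by
  obtain ⟨a, ha⟩ := hs.exists_isLUB (hne.image e) (e.monotone.map_bddAbove hbdd)
  exact ⟨e.symm a, e.isLUB_image.mp ha⟩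

theorem IsLUB.of_subtype_le {T : Type*} [Preorder T] {b : T}
    (hinf : ∀ u : T, ∃ m : T, IsGLB {u, b} m) {A : Set T} (hA : ∀ a ∈ A, a ≤ b)
    {t : {σ : T // σ ≤ b}} (ht : IsLUB (Subtype.val ⁻¹' A) t) : IsLUB A t.1 := by
  refine ⟨fun a ha => ht.1 (show (⟨a, hA a ha⟩ : {σ : T // σ ≤ b}) ∈ _ from ha), fun u hu => ?_⟩
  obtain ⟨m, hm⟩ := hinf u
  have hmb : m ≤ b := hm.1 (by simp)
  have hmu : m ≤ u := hm.1 (by simp)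
  have hm_ub : (⟨m, hmb⟩ : {σ : T // σ ≤ b}) ∈ upperBounds (Subtype.val ⁻¹' A) := by
    intro a ha
    exact hm.2 (by rintro y (rfl | rfl) <;> [exact hu ha; exact a.2])
  exact le_trans (ht.2 hm_ub : t.1 ≤ m) hmu

/-- in a poset with a smallest element whose down-sets are
order-isomorphic to real intervals, if every pair has an infimum then every
non-empty subset has an infimum. -/
theorem pairwise_infima_imply_infima {T : Type*} [PartialOrder T]
    (τ₀ : T) (hroot : ∀ t : T, τ₀ ≤ t)
    (hI : ∀ τ : T, ∃ s : Set ℝ, s.OrdConnected ∧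
      Nonempty ({σ : T // σ ≤ τ} ≃o s))
    (hpair : ∀ a b : T, ∃ t : T, IsGLB {a, b} t) :
    ∀ S : Set T, S.Nonempty → ∃ t : T, IsGLB S t := by
  rintro S ⟨s₀, hs₀⟩
  obtain ⟨I, hI, ⟨e⟩⟩ := hI s₀
  have hL_le : ∀ l ∈ lowerBounds S, l ≤ s₀ := fun l hl => hl hs₀
  obtain ⟨t, ht⟩ := e.exists_isLUB_of_ordConnected hI
    (A := Subtype.val ⁻¹' lowerBounds S) ⟨⟨τ₀, hroot s₀⟩, fun x _ => hroot x⟩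
    ⟨⟨s₀, le_rfl⟩, fun l _ => l.2⟩
  exact ⟨t.1, isLUB_lowerBounds.mp (ht.of_subtype_le (fun u => hpair u s₀) hL_le)⟩
end

section
/- Let (R,m) be a two-dimensional regular local ring with regular system of parameters (x,y), and let ν be a centered valuation on R. If (a₁,b₁), (a₂,b₂) ∈ S satisfy ν(a₁x + b₁y) > ν(m) and ν(a₂x + b₂y) > ν(m), then (a₁,b₁) ~ (a₂,b₂), i.e., a₁b₂ − a₂b₁ ∈ m. -/
open IsLocalRing

/-! If `a₁b₂ - a₂b₁` were a unit, the two linear forms `aᵢx + bᵢy` would span `x` and `y` up to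
that unit. The elements of value `> ν(m)` are closed under `R`-linear combinations, so `x`, `y` and
hence all of `m = (x, y)` would have value `> ν(m)`, contradicting that `ν(m)` is attained on `m`. -/

section

variable {R Γ : Type*} [CommRing R] [AddCommMonoid Γ] [LinearOrder Γ] [IsOrderedAddMonoid Γ]
  {v : R → Γ}

theorem le_apply_mul_left (hmul : ∀ a b : R, v (a * b) = v a + v b) (hnonneg : ∀ a : R, 0 ≤ v a)
    (a b : R) : v b ≤ v (a * b) := by
  rw [hmul]
  exact le_add_of_nonneg_left (hnonneg a)

theorem apply_mul_of_isUnit (hmul : ∀ a b : R, v (a * b) = v a + v b)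
    (hnonneg : ∀ a : R, 0 ≤ v a) {u : R} (hu : IsUnit u) (a : R) : v (u * a) = v a := by
  refine le_antisymm ?_ (le_apply_mul_left hmul hnonneg u a)
  calc v (u * a) ≤ v (hu.unit⁻¹ * (u * a)) := le_apply_mul_left hmul hnonneg _ _
    _ = v a := by rw [← mul_assoc, hu.val_inv_mul, one_mul]

theorem lt_apply_mul_add_mul (hmul : ∀ a b : R, v (a * b) = v a + v b)
    (hadd : ∀ a b : R, min (v a) (v b) ≤ v (a + b)) (hnonneg : ∀ a : R, 0 ≤ v a)
    {c : Γ} {a b : R} (ha : c < v a) (hb : c < v b) (r s : R) : c < v (r * a + s * b) :=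
  (lt_min (ha.trans_le (le_apply_mul_left hmul hnonneg r a))
    (hb.trans_le (le_apply_mul_left hmul hnonneg s b))).trans_le (hadd _ _)

end

theorem both_excess_implies_equiv_general {R : Type*} [CommRing R]
    [IsLocalRing R]
    (x y : R) (hxy : maximalIdeal R = Ideal.span {x, y})
    (v : R → WithTop ℝ)
    (hmul : ∀ a b : R, v (a * b) = v a + v b)
    (hadd : ∀ a b : R, min (v a) (v b) ≤ v (a + b))
    (hnonneg : ∀ a : R, 0 ≤ v a)
    (vm : WithTop ℝ)
    (hvm : IsLeast {c | ∃ φ ∈ maximalIdeal R, v φ = c} vm)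
    (a₁ b₁ a₂ b₂ : R)
    (hv₁ : vm < v (a₁ * x + b₁ * y)) (hv₂ : vm < v (a₂ * x + b₂ * y)) :
    a₁ * b₂ - a₂ * b₁ ∈ maximalIdeal R := by
  by_contra hD
  have hDu : IsUnit (a₁ * b₂ - a₂ * b₁) := by simpa [mem_maximalIdeal, mem_nonunits_iff] using hD
  have hx : vm < v x := by
    rw [← apply_mul_of_isUnit hmul hnonneg hDu]
    convert lt_apply_mul_add_mul hmul hadd hnonneg hv₁ hv₂ b₂ (-b₁) using 2
    ring
  have hy : vm < v y := by
    rw [← apply_mul_of_isUnit hmul hnonneg hDu]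
    convert lt_apply_mul_add_mul hmul hadd hnonneg hv₁ hv₂ (-a₂) a₁ using 2
    ring
  obtain ⟨φ, hφ, hφv⟩ := hvm.1
  rw [hxy, Ideal.mem_span_pair] at hφ
  obtain ⟨c, d, rfl⟩ := hφ
  exact (lt_apply_mul_add_mul hmul hadd hnonneg hx hy c d).ne' hφv

/-- for a centered valuation `ν` on a two-dimensional regular local
ring with regular system of parameters `(x,y)`, if `(a₁,b₁), (a₂,b₂) ∈ S` satisfy
`ν(a₁x + b₁y) > ν(m)` and `ν(a₂x + b₂y) > ν(m)`, then `a₁b₂ - a₂b₁ ∈ m`. -/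
theorem both_excess_implies_equiv {R : Type*} [CommRing R] [IsDomain R]
    [IsLocalRing R] [IsNoetherianRing R]
    (hdim : ringKrullDim R = 2)
    (x y : R) (hxy : maximalIdeal R = Ideal.span {x, y})
    (v : R → WithTop ℝ)
    (hmul : ∀ a b : R, v (a * b) = v a + v b)
    (hadd : ∀ a b : R, min (v a) (v b) ≤ v (a + b))
    (hone : v 1 = 0) (hzero : v 0 = ⊤)
    (hnonneg : ∀ a : R, 0 ≤ v a)
    (hcent : ∀ a ∈ maximalIdeal R, 0 < v a)
    (vm : WithTop ℝ)
    (hvm : IsLeast {c | ∃ φ ∈ maximalIdeal R, v φ = c} vm)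
    (a₁ b₁ a₂ b₂ : R)
    (ha₁ : IsUnit a₁ ∨ a₁ = 0) (hb₁ : IsUnit b₁ ∨ b₁ = 0)
    (ha₂ : IsUnit a₂ ∨ a₂ = 0) (hb₂ : IsUnit b₂ ∨ b₂ = 0)
    (hne₁ : ¬(a₁ = 0 ∧ b₁ = 0)) (hne₂ : ¬(a₂ = 0 ∧ b₂ = 0))
    (hv₁ : vm < v (a₁ * x + b₁ * y)) (hv₂ : vm < v (a₂ * x + b₂ * y)) :
    a₁ * b₂ - a₂ * b₁ ∈ maximalIdeal R :=
  both_excess_implies_equiv_general x y hxy v hmul hadd hnonneg vm hvm a₁ b₁ a₂ b₂ hv₁ hv₂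
end

section
/- Let (R,m) be a two-dimensional regular local ring with regular system of parameters (x,y). Given two centered valuations ν, μ: R → ℝ ∪ {∞}, there exist a, b ∈ R^× ∪ {0}, not both zero, such that ν(ax + by) = ν(m) and μ(ax + by) = μ(m). -/
open IsLocalRing

/-!
Each of the three elements `x`, `y`, `x + y` is a candidate for `ax + by`. For any valuation
`v`, at least two of them have value `min (v x) (v y) = v(m)`: if `v x ≠ v y`, the smaller one
and `x + y` do, and otherwise `x` and `y` do. Two two-element subsets of a three-element set
meet, so some candidate works for both valuations.
-/

theorem exists_common_of_two_of_three {p₁ p₂ p₃ q₁ q₂ q₃ : Prop}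
    (hp : (p₁ ∧ p₂) ∨ (p₁ ∧ p₃) ∨ (p₂ ∧ p₃)) (hq : (q₁ ∧ q₂) ∨ (q₁ ∧ q₃) ∨ (q₂ ∧ q₃)) :
    (p₁ ∧ q₁) ∨ (p₂ ∧ q₂) ∨ (p₃ ∧ q₃) := by
  tauto

namespace AddValuation

variable {R : Type*} [CommRing R] (v : AddValuation R (WithTop ℝ))

theorem min_attained_twice (x y : R) :
    (v x = min (v x) (v y) ∧ v y = min (v x) (v y)) ∨
      (v x = min (v x) (v y) ∧ v (x + y) = min (v x) (v y)) ∨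
      (v y = min (v x) (v y) ∧ v (x + y) = min (v x) (v y)) := by
  by_cases hxy : v x = v y
  · simp [hxy]
  · rw [v.map_add_of_distinct_val hxy]
    rcases le_total (v x) (v y) with h | h
    · simp [h]
    · simp [h]

theorem isLeast_image_span_pair (hnonneg : ∀ a, 0 ≤ v a) (x y : R) :
    IsLeast (v '' Ideal.span {x, y}) (min (v x) (v y)) := by
  refine ⟨?_, ?_⟩
  · rcases min_choice (v x) (v y) with h | h <;> rw [h]
    · exact ⟨x, Ideal.subset_span (Set.mem_insert _ _), rfl⟩
    · exact ⟨y, Ideal.subset_span (Set.mem_insert_of_mem _ rfl), rfl⟩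
  · rintro _ ⟨φ, hφ, rfl⟩
    obtain ⟨a, b, rfl⟩ := Ideal.mem_span_pair.mp hφ
    calc min (v x) (v y) ≤ min (v (a * x)) (v (b * y)) := by
          rw [v.map_mul, v.map_mul]
          exact min_le_min (le_add_of_nonneg_left (hnonneg a))
            (le_add_of_nonneg_left (hnonneg b))
      _ ≤ v (a * x + b * y) := v.map_add _ _

end AddValuation

theorem exists_common_minimizing_element_general {R : Type*} [CommRing R]
    [IsLocalRing R]
    (x y : R) (hxy : maximalIdeal R = Ideal.span {x, y})
    (v w : R → WithTop ℝ)
    (hvmul : ∀ a b : R, v (a * b) = v a + v b)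
    (hvadd : ∀ a b : R, min (v a) (v b) ≤ v (a + b))
    (hvone : v 1 = 0) (hvzero : v 0 = ⊤)
    (hvnonneg : ∀ a : R, 0 ≤ v a)
    (hwmul : ∀ a b : R, w (a * b) = w a + w b)
    (hwadd : ∀ a b : R, min (w a) (w b) ≤ w (a + b))
    (hwone : w 1 = 0) (hwzero : w 0 = ⊤)
    (hwnonneg : ∀ a : R, 0 ≤ w a)
    (vm wm : WithTop ℝ)
    (hvm : IsLeast {c | ∃ φ ∈ maximalIdeal R, v φ = c} vm)
    (hwm : IsLeast {c | ∃ φ ∈ maximalIdeal R, w φ = c} wm) :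
    ∃ a b : R, (IsUnit a ∨ a = 0) ∧ (IsUnit b ∨ b = 0) ∧ ¬(a = 0 ∧ b = 0) ∧
      v (a * x + b * y) = vm ∧ w (a * x + b * y) = wm := by
  let V := AddValuation.of v hvzero hvone hvadd hvmul
  let W := AddValuation.of w hwzero hwone hwadd hwmul
  rw [hxy] at hvm hwm
  obtain rfl : vm = min (v x) (v y) := hvm.unique (V.isLeast_image_span_pair hvnonneg x y)
  obtain rfl : wm = min (w x) (w y) := hwm.unique (W.isLeast_image_span_pair hwnonneg x y)
  have hcommon := exists_common_of_two_of_three (V.min_attained_twice x y)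
    (W.min_attained_twice x y)
  simp only [V, W, AddValuation.of_apply] at hcommon
  rcases hcommon with ⟨hv, hw⟩ | ⟨hv, hw⟩ | ⟨hv, hw⟩
  · exact ⟨1, 0, .inl isUnit_one, .inr rfl, by simp, by simpa using hv, by simpa using hw⟩
  · exact ⟨0, 1, .inr rfl, .inl isUnit_one, by simp, by simpa using hv, by simpa using hw⟩
  · exact ⟨1, 1, .inl isUnit_one, .inl isUnit_one, by simp, by simpa using hv, by simpa using hw⟩

/-- given two centered valuations `ν, μ` on a two-dimensional
regular local ring with regular system of parameters `(x,y)`, there exist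
`a, b ∈ R^× ∪ {0}`, not both zero, with `ν(ax+by) = ν(m)` and `μ(ax+by) = μ(m)`. -/
theorem exists_common_minimizing_element {R : Type*} [CommRing R] [IsDomain R]
    [IsLocalRing R] [IsNoetherianRing R]
    (hdim : ringKrullDim R = 2)
    (x y : R) (hxy : maximalIdeal R = Ideal.span {x, y})
    (v w : R → WithTop ℝ)
    (hvmul : ∀ a b : R, v (a * b) = v a + v b)
    (hvadd : ∀ a b : R, min (v a) (v b) ≤ v (a + b))
    (hvone : v 1 = 0) (hvzero : v 0 = ⊤)
    (hvnonneg : ∀ a : R, 0 ≤ v a)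
    (hvcent : ∀ a ∈ maximalIdeal R, 0 < v a)
    (hwmul : ∀ a b : R, w (a * b) = w a + w b)
    (hwadd : ∀ a b : R, min (w a) (w b) ≤ w (a + b))
    (hwone : w 1 = 0) (hwzero : w 0 = ⊤)
    (hwnonneg : ∀ a : R, 0 ≤ w a)
    (hwcent : ∀ a ∈ maximalIdeal R, 0 < w a)
    (vm wm : WithTop ℝ)
    (hvm : IsLeast {c | ∃ φ ∈ maximalIdeal R, v φ = c} vm)
    (hwm : IsLeast {c | ∃ φ ∈ maximalIdeal R, w φ = c} wm) :
    ∃ a b : R, (IsUnit a ∨ a = 0) ∧ (IsUnit b ∨ b = 0) ∧ ¬(a = 0 ∧ b = 0) ∧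
      v (a * x + b * y) = vm ∧ w (a * x + b * y) = wm :=
  exists_common_minimizing_element_general x y hxy v w hvmul hvadd hvone hvzero hvnonneg hwmul hwadd
    hwone hwzero hwnonneg vm wm hvm hwm
end

section
/- Let (T, ≤) be a rooted non-metric tree (with infima of pairs). For τ, σ, α ∈ T with α ≠ τ ≠ σ: α ∉ [σ]_τ (the tangent-vector class of σ at τ) if and only if τ ∈ [α, σ], the closed segment connecting α and σ. -/
variable {T : Type*} [PartialOrder T]

/-- The closed segment `[a,b] = {γ | a∧b ≤ γ ≤ a or a∧b ≤ γ ≤ b}`, where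
`wedge a b` is the infimum `a∧b`. -/
def seg (wedge : T → T → T) (a b : T) : Set T :=
  {γ | (wedge a b ≤ γ ∧ γ ≤ a) ∨ (wedge a b ≤ γ ∧ γ ≤ b)}

/-- The half-open segment `]a,b] = [a,b] \ {a}`. -/
def segOC (wedge : T → T → T) (a b : T) : Set T :=
  seg wedge a b \ {a}

/-- The tangent relation at `τ`: `a ~_τ b ↔ ]τ,a] ∩ ]τ,b] ≠ ∅`. -/
def tangRel (wedge : T → T → T) (τ a b : T) : Prop :=
  (segOC wedge τ a ∩ segOC wedge τ b).Nonempty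

/-- The tangent-vector class `[σ]_τ` of `σ` at `τ`, a subset of `T \ {τ}`. -/
def tangClass (wedge : T → T → T) (τ σ : T) : Set T :=
  {α | α ≠ τ ∧ tangRel wedge τ σ α}

/-!
Write `m = α ∧ σ`. If `τ ∈ [α, σ]`, say `m ≤ τ ≤ α`, then `]τ, α]` consists of points strictly
above `τ`, and such a point lying in `]τ, σ]` would be below `σ`, hence below `m ≤ τ`.
Conversely, if `τ ∉ [α, σ]`, a common point of `]τ, σ]` and `]τ, α]` is found by cases: when `τ`
lies below both `σ` and `α` it is `σ ∧ α`, which must then be strictly above `τ`; when `τ` lies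
below neither, it is the larger of `τ ∧ σ` and `τ ∧ α`, which are comparable because the
down-set of `τ` is a chain; and `τ` cannot lie below exactly one of them, for then `τ` and `m`
are comparable in the down-set of the other, forcing `m ≤ τ`.
-/

theorem isChain_Iic_of_orderIso {β : Type*} [LinearOrder β] {c : T}
    (e : {σ : T // σ ≤ c} ≃o β) : IsChain (· ≤ ·) (Set.Iic c) := fun a ha b hb _ =>
  (le_total (e ⟨a, ha⟩) (e ⟨b, hb⟩)).imp e.le_iff_le.1 e.le_iff_le.1

theorem tangRel_comm (wedge : T → T → T) (τ σ α : T) :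
    tangRel wedge τ σ α ↔ tangRel wedge τ α σ := by
  rw [tangRel, tangRel, Set.inter_comm]

theorem mem_segOC_of_wedge_le_of_lt {τ σ γ : T} (h₁ : wedge τ σ ≤ γ) (h₂ : γ < τ) :
    γ ∈ segOC wedge τ σ :=
  ⟨Or.inl ⟨h₁, h₂.le⟩, h₂.ne⟩

section Wedge

variable {wedge : T → T → T} (hwedge : ∀ a b : T, IsGLB {a, b} (wedge a b))
include hwedge

theorem wedge_le_left (a b : T) : wedge a b ≤ a :=
  (hwedge a b).1 (Set.mem_insert a {b})

theorem wedge_le_right (a b : T) : wedge a b ≤ b :=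
  (hwedge a b).1 (Set.mem_insert_of_mem a rfl)

theorem le_wedge {a b c : T} (ha : c ≤ a) (hb : c ≤ b) : c ≤ wedge a b :=
  (hwedge a b).2 (by rintro x (rfl | rfl) <;> assumption)

theorem wedge_comm (a b : T) : wedge a b = wedge b a :=
  (hwedge a b).unique (Set.pair_comm a b ▸ hwedge b a)

theorem wedge_eq_left {a b : T} (h : a ≤ b) : wedge a b = a :=
  (wedge_le_left hwedge a b).antisymm (le_wedge hwedge le_rfl h)

theorem seg_comm (a b : T) : seg wedge a b = seg wedge b a := by
  ext γ
  simp only [seg, wedge_comm hwedge a b]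
  exact or_comm

theorem mem_segOC_iff_of_le {τ σ γ : T} (h : τ ≤ σ) :
    γ ∈ segOC wedge τ σ ↔ τ < γ ∧ γ ≤ σ := by
  have hw := wedge_eq_left hwedge h
  constructor
  · rintro ⟨⟨h₁, h₂⟩ | ⟨h₁, h₂⟩, hne : γ ≠ τ⟩
    · exact absurd (h₂.antisymm (hw.ge.trans h₁)) hne
    · exact ⟨(hw.ge.trans h₁).lt_of_ne' hne, h₂⟩
  · rintro ⟨h₁, h₂⟩
    exact ⟨Or.inr ⟨hw.le.trans h₁.le, h₂⟩, h₁.ne'⟩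

theorem wedge_lt_of_not_le {τ σ : T} (h : ¬τ ≤ σ) : wedge τ σ < τ :=
  (wedge_le_left hwedge τ σ).lt_of_ne fun e => h (e ▸ wedge_le_right hwedge τ σ)

theorem not_tangRel_of_wedge_le_of_le {τ σ α : T} (hm : wedge α σ ≤ τ) (hτα : τ ≤ α) :
    ¬tangRel wedge τ σ α := by
  rintro ⟨γ, hγσ, hγα⟩
  obtain ⟨hτγ, hγα⟩ := (mem_segOC_iff_of_le hwedge hτα).1 hγα
  obtain ⟨⟨-, hγτ⟩ | ⟨-, hγσ⟩, -⟩ := hγσ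
  · exact hτγ.not_ge hγτ
  · exact hτγ.not_ge ((le_wedge hwedge hγα hγσ).trans hm)

theorem not_tangRel_of_mem_seg {τ σ α : T} (h : τ ∈ seg wedge α σ) :
    ¬tangRel wedge τ σ α := by
  rcases h with ⟨hm, hτα⟩ | ⟨hm, hτσ⟩
  · exact not_tangRel_of_wedge_le_of_le hwedge hm hτα
  · rw [tangRel_comm]
    exact not_tangRel_of_wedge_le_of_le hwedge (wedge_comm hwedge α σ ▸ hm) hτσ

theorem tangRel_of_lt_wedge {τ σ α : T} (h : τ < wedge σ α) : tangRel wedge τ σ α :=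
  ⟨wedge σ α,
    (mem_segOC_iff_of_le hwedge (h.le.trans (wedge_le_left hwedge σ α))).2
      ⟨h, wedge_le_left hwedge σ α⟩,
    (mem_segOC_iff_of_le hwedge (h.le.trans (wedge_le_right hwedge σ α))).2
      ⟨h, wedge_le_right hwedge σ α⟩⟩

theorem tangRel_of_wedge_le_wedge_of_not_le {τ σ α : T} (hle : wedge τ σ ≤ wedge τ α)
    (hτα : ¬τ ≤ α) : tangRel wedge τ σ α :=
  have hlt := wedge_lt_of_not_le hwedge hτα
  ⟨wedge τ α, mem_segOC_of_wedge_le_of_lt hle hlt,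
    mem_segOC_of_wedge_le_of_lt le_rfl hlt⟩

variable (hchain : ∀ c : T, IsChain (· ≤ ·) (Set.Iic c))
include hchain

theorem tangRel_of_not_le_of_not_le {τ σ α : T} (hτσ : ¬τ ≤ σ) (hτα : ¬τ ≤ α) :
    tangRel wedge τ σ α := by
  rcases (hchain τ).total (wedge_le_left hwedge τ σ) (wedge_le_left hwedge τ α) with h | h
  · exact tangRel_of_wedge_le_wedge_of_not_le hwedge h hτα
  · exact (tangRel_comm wedge τ α σ).1 (tangRel_of_wedge_le_wedge_of_not_le hwedge h hτσ)

theorem mem_seg_of_le_of_not_le {τ σ α : T} (hτσ : τ ≤ σ) (hτα : ¬τ ≤ α) :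
    τ ∈ seg wedge α σ := by
  refine Or.inr ⟨?_, hτσ⟩
  refine ((hchain σ).total (wedge_le_right hwedge α σ) hτσ).resolve_right fun h => ?_
  exact hτα (h.trans (wedge_le_left hwedge α σ))

theorem mem_seg_of_not_tangRel {τ σ α : T} (h : ¬tangRel wedge τ σ α) :
    τ ∈ seg wedge α σ := by
  by_cases hτσ : τ ≤ σ <;> by_cases hτα : τ ≤ α
  · have hτm : τ = wedge σ α :=
      (le_wedge hwedge hτσ hτα).eq_of_not_lt fun hlt => h (tangRel_of_lt_wedge hwedge hlt)
    exact Or.inr ⟨wedge_comm hwedge α σ ▸ hτm.ge, hτσ⟩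
  · exact mem_seg_of_le_of_not_le hwedge hchain hτσ hτα
  · rw [seg_comm hwedge]
    exact mem_seg_of_le_of_not_le hwedge hchain hτα hτσ
  · exact absurd (tangRel_of_not_le_of_not_le hwedge hchain hτσ hτα) h

end Wedge

theorem not_mem_tangClass_iff_mem_seg_general
    -- (T2): down-sets are order-isomorphic to real intervals
    (hI : ∀ τ : T, ∃ s : Set ℝ, s.OrdConnected ∧
      Nonempty ({σ : T // σ ≤ τ} ≃o s))
    -- (T4'): pairwise infima, realized by `wedge`
    (wedge : T → T → T) (hwedge : ∀ a b : T, IsGLB {a, b} (wedge a b))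
    (τ σ α : T) (hα : α ≠ τ) :
    α ∉ tangClass wedge τ σ ↔ τ ∈ seg wedge α σ := by
  have hchain : ∀ c : T, IsChain (· ≤ ·) (Set.Iic c) := fun c =>
    let ⟨_, _, ⟨e⟩⟩ := hI c
    isChain_Iic_of_orderIso e
  constructor
  · exact fun h => mem_seg_of_not_tangRel hwedge hchain fun ht => h ⟨hα, ht⟩
  · rintro hτ ⟨-, ht⟩
    exact not_tangRel_of_mem_seg hwedge hτ ht

/-- in a rooted non-metric tree, for `α ≠ τ ≠ σ`, the point `α`
is not in the tangent class `[σ]_τ` iff `τ` lies on the closed segment `[α,σ]`. -/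
theorem not_mem_tangClass_iff_mem_seg
    -- (T1): a root
    (τ₀ : T) (hroot : ∀ t : T, τ₀ ≤ t)
    -- (T2): down-sets are order-isomorphic to real intervals
    (hI : ∀ τ : T, ∃ s : Set ℝ, s.OrdConnected ∧
      Nonempty ({σ : T // σ ≤ τ} ≃o s))
    -- (T3): totally ordered convex subsets are order-isomorphic to real intervals
    (hT3 : ∀ C : Set T, IsChain (· ≤ ·) C → C.OrdConnected →
      ∃ s : Set ℝ, s.OrdConnected ∧ Nonempty (C ≃o s))
    -- (T4'): pairwise infima, realized by `wedge`
    (wedge : T → T → T) (hwedge : ∀ a b : T, IsGLB {a, b} (wedge a b))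
    (τ σ α : T) (hα : α ≠ τ) (hσ : σ ≠ τ) :
    α ∉ tangClass wedge τ σ ↔ τ ∈ seg wedge α σ :=
  not_mem_tangClass_iff_mem_seg_general hI wedge hwedge τ σ α hα
end

section
/- Let R be a two-dimensional regular local ring (hence a UFD) and ν a centered real-valued valuation on R with support p_ν satisfying (0) ⊊ p_ν ⊊ m. Then p_ν = (φ) for an irreducible element φ ∈ R, and the map krull[ν]: R → (ℤ × ℝ) ∪ {∞} (lexicographic order) defined by krull[ν](ψ) = (r, ν(ψ')) where ψ = φ^r ψ' with φ ∤ ψ' is a Krull valuation on R (i.e., krull[ν]⁻¹(∞) = {0}), and its definition is independent of the choice of generator φ of p_ν. -/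
/-!
Since `m` has height `ringKrullDim R = 2`, the prime `p_ν`, strictly between `(0)` and `m`,
has height one, so in the UFD `R` it is generated by any prime `φ` it contains. Every `x ≠ 0`
is uniquely `φ ^ r * c` with `φ ∤ c`, where `ν c` is finite. Multiplicativity of `(r, ν c)`
follows from `φ` being prime. For the ultrametric inequality one may assume `φ ∤ a`: if
`φ ∣ a + b` the first coordinate jumps, and otherwise `ν (a + b) ≥ min (ν a) (ν b)` with finite
values. Two generators differ by a unit, on which `ν ≥ 0` forces `ν = 0`.
-/

open IsLocalRing

/-- `w` represents the Krull valuation `krull[ν]` associated with `ν` and the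
irreducible element `φ` generating the support: `w(φ^r ψ') = (r, ν(ψ'))` whenever
`φ ∤ ψ'`, with values in `ℤ ×ₗ ℝ` (lexicographic order). -/
def KrullRep {R : Type*} [CommRing R] (φ : R) (v : R → WithTop ℝ)
    (w : R → WithTop (ℤ ×ₗ ℝ)) : Prop :=
  w 0 = ⊤ ∧ ∀ (r : ℕ) (ψ' : R), ¬ φ ∣ ψ' →
    w (φ ^ r * ψ') = ((toLex ((r : ℤ), WithTop.untopD 0 (v ψ')) : ℤ ×ₗ ℝ) : WithTop (ℤ ×ₗ ℝ))

theorem Ideal.height_eq_one_of_ne_bot_of_lt_maximalIdeal {R : Type*} [CommRing R] [IsDomain R]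
    [IsLocalRing R] (hdim : ringKrullDim R ≤ 2) {P : Ideal R} [P.IsPrime] (hP0 : P ≠ ⊥)
    (hPm : P < maximalIdeal R) : P.height = 1 := by
  have hle : P.height + 1 ≤ 2 := WithBot.coe_le_coe.mp <|
    calc ((P.height + 1 : ℕ∞) : WithBot ℕ∞) ≤ (maximalIdeal R).height :=
          WithBot.coe_le_coe.mpr (Ideal.height_add_one_le_of_lt_of_isPrime hPm)
      _ = ringKrullDim R := maximalIdeal_height_eq_ringKrullDim
      _ ≤ 2 := hdim
  rw [show (2 : ℕ∞) = 1 + 1 from rfl, ENat.add_le_add_iff_right ENat.one_ne_top] at hle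
  exact le_antisymm hle <| Order.one_le_iff_ne_zero.mpr (mt Ideal.height_eq_zero_iff_eq_bot.mp hP0)

theorem AddValuation.isPrime_supp {R Γ₀ : Type*} [CommRing R]
    [LinearOrderedAddCommGroupWithTop Γ₀] (v : AddValuation R Γ₀) : v.supp.IsPrime where
  ne_top' h := LinearOrderedAddCommGroupWithTop.zero_ne_top <| by
    rw [← v.map_one, ← v.mem_supp_iff, h]
    exact Submodule.mem_top
  mem_or_mem' {a b} := by
    simpa only [mem_supp_iff, v.map_mul] using LinearOrderedAddCommGroupWithTop.add_eq_top.mp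

theorem AddValuation.map_units_eq_zero {R Γ₀ : Type*} [Ring R]
    [LinearOrderedAddCommMonoidWithTop Γ₀] (v : AddValuation R Γ₀) (hv : ∀ a, 0 ≤ v a) (u : Rˣ) :
    v u = 0 :=
  ((add_eq_zero_iff_of_nonneg (hv u) (hv ↑u⁻¹)).mp
    (by rw [← v.map_mul, u.mul_inv, v.map_one])).1

theorem eq_and_eq_of_pow_mul_eq_pow_mul {M : Type*} [CommMonoidWithZero M] [IsCancelMulZero M]
    {φ a b : M} {r s : ℕ} (hφ : φ ≠ 0) (ha : ¬φ ∣ a) (hb : ¬φ ∣ b) (h : φ ^ r * a = φ ^ s * b) :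
    r = s ∧ a = b := by
  wlog hrs : r ≤ s generalizing r s a b
  · obtain ⟨h₁, h₂⟩ := this hb ha h.symm (le_of_not_ge hrs)
    exact ⟨h₁.symm, h₂.symm⟩
  obtain ⟨k, rfl⟩ := Nat.exists_eq_add_of_le hrs
  rw [pow_add, mul_assoc] at h
  have hab : a = φ ^ k * b := mul_left_cancel₀ (pow_ne_zero r hφ) h
  obtain rfl : k = 0 := by
    by_contra hk
    exact ha (hab ▸ (dvd_pow_self φ hk).mul_right b)
  simpa using hab

section KrullRep

variable {R : Type*} [CommRing R] {φ : R} {w w' : R → WithTop (ℤ ×ₗ ℝ)}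

open scoped Classical in
/-- The decomposition `x = φ ^ r * c` with `¬φ ∣ c` is unique when `φ ≠ 0`
(`eq_and_eq_of_pow_mul_eq_pow_mul`), so the choices made here are harmless. -/
noncomputable def krullVal (φ : R) (v : R → WithTop ℝ) (x : R) : WithTop (ℤ ×ₗ ℝ) :=
  if h : ∃ (r : ℕ) (c : R), ¬φ ∣ c ∧ x = φ ^ r * c then
    (toLex ((h.choose : ℤ), WithTop.untopD 0 (v h.choose_spec.choose)) : ℤ ×ₗ ℝ)
  else ⊤

section

variable {v : R → WithTop ℝ}

theorem krullRep_krullVal [IsDomain R] (hφ : φ ≠ 0) : KrullRep φ v (krullVal φ v) := by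
  refine ⟨dif_neg ?_, fun r c hc ↦ ?_⟩
  · rintro ⟨r, c, hc, h⟩
    obtain rfl : c = 0 := (mul_eq_zero.mp h.symm).resolve_left (pow_ne_zero r hφ)
    exact hc (dvd_zero φ)
  · have h : ∃ (r' : ℕ) (c' : R), ¬φ ∣ c' ∧ φ ^ r * c = φ ^ r' * c' := ⟨r, c, hc, rfl⟩
    obtain ⟨hc', hrc⟩ := h.choose_spec.choose_spec
    obtain ⟨hr, hcc⟩ := eq_and_eq_of_pow_mul_eq_pow_mul hφ hc hc' hrc
    rw [krullVal, dif_pos h, ← hcc, ← hr]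

theorem KrullRep.unique [WfDvdMonoid R] (hφ : Irreducible φ)
    (hw : KrullRep φ v w) (hw' : KrullRep φ v w') : w = w' := by
  funext x
  rcases eq_or_ne x 0 with rfl | hx
  · rw [hw.1, hw'.1]
  obtain ⟨r, c, hc, rfl⟩ := WfDvdMonoid.max_power_factor hx hφ
  rw [hw.2 r c hc, hw'.2 r c hc]

theorem KrullRep.apply_of_not_dvd (hw : KrullRep φ v w) {c : R} (hc : ¬φ ∣ c) :
    w c = (toLex (0, WithTop.untopD 0 (v c)) : ℤ ×ₗ ℝ) := by
  simpa using hw.2 0 c hc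

theorem KrullRep.eq_top_iff [WfDvdMonoid R] (hφ : Irreducible φ) (hw : KrullRep φ v w) {x : R} :
    w x = ⊤ ↔ x = 0 := by
  refine ⟨fun h ↦ by_contra fun hx ↦ ?_, fun h ↦ h ▸ hw.1⟩
  obtain ⟨r, c, hc, rfl⟩ := WfDvdMonoid.max_power_factor hx hφ
  exact WithTop.coe_ne_top ((hw.2 r c hc).symm.trans h)

theorem KrullRep.lt_of_dvd [WfDvdMonoid R] (hφ : Irreducible φ) (hw : KrullRep φ v w) {a z : R}
    (ha : ¬φ ∣ a) (hz : φ ∣ z) : w a < w z := by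
  rcases eq_or_ne z 0 with rfl | hz0
  · rw [hw.1, hw.apply_of_not_dvd ha]
    exact WithTop.coe_lt_top _
  obtain ⟨k, c, hc, rfl⟩ := WfDvdMonoid.max_power_factor hz0 hφ
  have hk : k ≠ 0 := by
    rintro rfl
    exact hc (by simpa using hz)
  rw [hw.apply_of_not_dvd ha, hw.2 k c hc, WithTop.coe_lt_coe, Prod.Lex.toLex_lt_toLex]
  exact Or.inl (by simpa [Nat.pos_iff_ne_zero] using hk)

end

section

variable {v : AddValuation R (WithTop ℝ)}

theorem KrullRep.of_associated {φ' : R} (hv : ∀ u : Rˣ, v u = 0) (h : Associated φ φ')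
    (hw : KrullRep φ' v w) : KrullRep φ v w := by
  obtain ⟨u, rfl⟩ := h
  refine ⟨hw.1, fun r c hc ↦ ?_⟩
  have hc' : ¬φ * u ∣ ↑(u⁻¹ ^ r) * c := by
    rwa [Units.dvd_mul_left, Units.mul_right_dvd]
  have hφc : φ ^ r * c = (φ * u) ^ r * (↑(u⁻¹ ^ r) * c) := by
    rw [mul_pow, mul_assoc, ← mul_assoc _ _ c, ← Units.val_pow_eq_pow_val, ← Units.val_mul,
      ← mul_pow, mul_inv_cancel, one_pow, Units.val_one, one_mul]
  rw [hφc, hw.2 r _ hc', v.map_mul, hv, zero_add]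

theorem KrullRep.map_one (hφ : ¬IsUnit φ) (hw : KrullRep φ v w) : w 1 = 0 := by
  rw [hw.apply_of_not_dvd (mt isUnit_of_dvd_one hφ), v.map_one]
  rfl

theorem KrullRep.le_of_not_dvd (hsupp : ∀ x, v x = ⊤ ↔ φ ∣ x) (hw : KrullRep φ v w) {a b : R}
    (hb : ¬φ ∣ b) (hab : v a ≤ v b) : w a ≤ w b := by
  have hvb : v b ≠ ⊤ := (hsupp b).not.mpr hb
  have ha : ¬φ ∣ a := (hsupp a).not.mp (ne_top_of_le_ne_top hvb hab)
  rw [hw.apply_of_not_dvd ha, hw.apply_of_not_dvd hb, WithTop.coe_le_coe,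
    Prod.Lex.toLex_le_toLex]
  exact Or.inr ⟨rfl, WithTop.untop₀_le_untop₀ hvb hab⟩

theorem KrullRep.min_le_add_of_not_dvd_add (hsupp : ∀ x, v x = ⊤ ↔ φ ∣ x) (hw : KrullRep φ v w)
    {a b : R} (hab : ¬φ ∣ a + b) : min (w a) (w b) ≤ w (a + b) := by
  rcases v.map_add' a b with h | h
  · exact min_le_of_left_le (hw.le_of_not_dvd hsupp hab h)
  · exact min_le_of_right_le (hw.le_of_not_dvd hsupp hab h)

theorem KrullRep.min_le_add_of_not_dvd_left [WfDvdMonoid R] (hφ : Irreducible φ)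
    (hsupp : ∀ x, v x = ⊤ ↔ φ ∣ x) (hw : KrullRep φ v w) {a : R} (ha : ¬φ ∣ a) (b : R) :
    min (w a) (w b) ≤ w (a + b) := by
  by_cases hab : φ ∣ a + b
  · exact min_le_of_left_le (hw.lt_of_dvd hφ ha hab).le
  · exact hw.min_le_add_of_not_dvd_add hsupp hab

variable [IsDomain R] [WfDvdMonoid R]

theorem KrullRep.map_mul (hφ : Prime φ) (hsupp : ∀ x, v x = ⊤ ↔ φ ∣ x) (hw : KrullRep φ v w)
    (x y : R) : w (x * y) = w x + w y := by
  rcases eq_or_ne x 0 with rfl | hx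
  · simp [hw.1]
  rcases eq_or_ne y 0 with rfl | hy
  · simp [hw.1]
  obtain ⟨r, a, ha, rfl⟩ := WfDvdMonoid.max_power_factor hx hφ.irreducible
  obtain ⟨s, b, hb, rfl⟩ := WfDvdMonoid.max_power_factor hy hφ.irreducible
  have hab : ¬φ ∣ a * b := fun h ↦ (hφ.dvd_or_dvd h).elim ha hb
  rw [show φ ^ r * a * (φ ^ s * b) = φ ^ (r + s) * (a * b) by ring, hw.2 _ _ hab, hw.2 _ _ ha,
    hw.2 _ _ hb, ← WithTop.coe_add, ← toLex_add, Prod.mk_add_mk, v.map_mul,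
    WithTop.untopD_add ((hsupp a).not.mpr ha) ((hsupp b).not.mpr hb)]
  push_cast
  rfl

/-- After factoring out the smaller power of `φ`, one of the two summands is prime to `φ`. -/
theorem KrullRep.min_le_add (hφ : Prime φ) (hsupp : ∀ x, v x = ⊤ ↔ φ ∣ x) (hw : KrullRep φ v w)
    (x y : R) : min (w x) (w y) ≤ w (x + y) := by
  rcases eq_or_ne x 0 with rfl | hx
  · simp [hw.1]
  rcases eq_or_ne y 0 with rfl | hy
  · simp [hw.1]
  obtain ⟨r, a, ha, rfl⟩ := WfDvdMonoid.max_power_factor hx hφ.irreducible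
  obtain ⟨s, b, hb, rfl⟩ := WfDvdMonoid.max_power_factor hy hφ.irreducible
  clear hx hy
  wlog hrs : r ≤ s generalizing r s a b
  · rw [min_comm, add_comm]
    exact this s b hb r a ha (le_of_not_ge hrs)
  obtain ⟨k, rfl⟩ := Nat.exists_eq_add_of_le hrs
  rw [pow_add, mul_assoc, ← mul_add]
  simp only [hw.map_mul hφ hsupp (φ ^ r), min_add_add_left]
  exact add_le_add le_rfl (hw.min_le_add_of_not_dvd_left hφ.irreducible hsupp ha _)

end

end KrullRep

theorem krull_valuation_of_support_general {R : Type*} [CommRing R] [IsDomain R]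
    [IsLocalRing R] [UniqueFactorizationMonoid R]
    (hdim : ringKrullDim R = 2)
    (v : R → WithTop ℝ)
    (hmul : ∀ a b : R, v (a * b) = v a + v b)
    (hadd : ∀ a b : R, min (v a) (v b) ≤ v (a + b))
    (hone : v 1 = 0) (hzero : v 0 = ⊤)
    (hnonneg : ∀ a : R, 0 ≤ v a)
    (P : Ideal R) (hPsupp : ∀ r : R, r ∈ P ↔ v r = ⊤)
    (hP0 : ⊥ < P) (hPm : P < maximalIdeal R) :
    ∃ φ : R, Irreducible φ ∧ P = Ideal.span {φ} ∧
      ∃ w : R → WithTop (ℤ ×ₗ ℝ),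
        KrullRep φ v w ∧
        (∀ a b : R, w (a * b) = w a + w b) ∧
        (∀ a b : R, min (w a) (w b) ≤ w (a + b)) ∧
        w 1 = 0 ∧
        (∀ ψ : R, w ψ = ⊤ ↔ ψ = 0) ∧
        (∀ (φ' : R) (w' : R → WithTop (ℤ ×ₗ ℝ)), Irreducible φ' →
          P = Ideal.span {φ'} → KrullRep φ' v w' → w' = w) := by
  let ν : AddValuation R (WithTop ℝ) := AddValuation.of v hzero hone hadd hmul
  have hPν : P = ν.supp := Ideal.ext hPsupp
  have : P.IsPrime := hPν ▸ ν.isPrime_supp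
  obtain ⟨φ, hφP, hφ⟩ := Ideal.IsPrime.exists_mem_prime_of_ne_bot ‹_› hP0.ne'
  have hPφ : P = Ideal.span {φ} := P.eq_span_singleton_of_height_eq_one
    (Ideal.height_eq_one_of_ne_bot_of_lt_maximalIdeal hdim.le hP0.ne' hPm) hφP hφ
  have hsupp (x : R) : ν x = ⊤ ↔ φ ∣ x := by
    rw [← Ideal.mem_span_singleton, ← hPφ]
    exact (hPsupp x).symm
  have hw : KrullRep φ ν (krullVal φ v) := krullRep_krullVal hφ.ne_zero
  refine ⟨φ, hφ.irreducible, hPφ, krullVal φ v, hw, hw.map_mul hφ hsupp,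
    hw.min_le_add hφ hsupp, hw.map_one hφ.not_isUnit, fun _ ↦ hw.eq_top_iff hφ.irreducible,
    fun φ' w' _ hPφ' hw' ↦ ?_⟩
  have hφφ' : Associated φ φ' :=
    Ideal.span_singleton_eq_span_singleton.mp (hPφ.symm.trans hPφ')
  exact (KrullRep.of_associated (v := ν) (ν.map_units_eq_zero hnonneg) hφφ' hw').unique
    hφ.irreducible hw

/-- for a centered real-valued valuation `ν` on a two-dimensional
regular local ring `R` (a UFD) whose support `p_ν` satisfies `(0) ⊊ p_ν ⊊ m`,
the support is generated by an irreducible `φ`, and the map `krull[ν]` given by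
`krull[ν](φ^r ψ') = (r, ν(ψ'))` (for `φ ∤ ψ'`) is a Krull valuation on `R` with
values in `ℤ ×ₗ ℝ`, independent of the chosen irreducible generator `φ`. -/
theorem krull_valuation_of_support {R : Type*} [CommRing R] [IsDomain R]
    [IsLocalRing R] [IsNoetherianRing R] [UniqueFactorizationMonoid R]
    (hdim : ringKrullDim R = 2)
    (hreg : ∃ x y : R, maximalIdeal R = Ideal.span {x, y})
    (v : R → WithTop ℝ)
    (hmul : ∀ a b : R, v (a * b) = v a + v b)
    (hadd : ∀ a b : R, min (v a) (v b) ≤ v (a + b))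
    (hone : v 1 = 0) (hzero : v 0 = ⊤)
    (hnonneg : ∀ a : R, 0 ≤ v a)
    (hcent : ∀ a ∈ maximalIdeal R, 0 < v a)
    (P : Ideal R) (hPsupp : ∀ r : R, r ∈ P ↔ v r = ⊤)
    (hP0 : ⊥ < P) (hPm : P < maximalIdeal R) :
    ∃ φ : R, Irreducible φ ∧ P = Ideal.span {φ} ∧
      ∃ w : R → WithTop (ℤ ×ₗ ℝ),
        KrullRep φ v w ∧
        (∀ a b : R, w (a * b) = w a + w b) ∧
        (∀ a b : R, min (w a) (w b) ≤ w (a + b)) ∧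
        w 1 = 0 ∧
        (∀ ψ : R, w ψ = ⊤ ↔ ψ = 0) ∧
        (∀ (φ' : R) (w' : R → WithTop (ℤ ×ₗ ℝ)), Irreducible φ' →
          P = Ideal.span {φ'} → KrullRep φ' v w' → w' = w) :=
  krull_valuation_of_support_general hdim v hmul hadd hone hzero hnonneg P hPsupp hP0 hPm
end

section
/- Let (T,≤) satisfy (T1), (T2), (T4'): smallest element, down-sets order-isomorphic to real intervals, and pairwise infima exist. Then for any nonempty S ⊆ T and fixed τ ∈ S, with Φ_τ: [τ₀, τ] → [a,b] ⊆ ℝ the order isomorphism, the element σ₀ := Φ_τ⁻¹(inf{Φ_τ(τ∧σ) : σ ∈ S}) is the infimum of S in T. -/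
/-!
Because `τ ∈ S`, the lower bounds of `S` are exactly those of `{τ ∧ σ : σ ∈ S} ⊆ [τ₀, τ]`.
Since `Φ_τ` is an order embedding into `ℝ`, it reflects the real infimum of
the values `Φ_τ(τ ∧ σ)` to the infimum of these elements, and since `[τ₀, τ]` is a down-set
of `T`, an infimum computed there is one in `T`.
-/

theorem IsGLB.of_map_eq_csInf {α β : Type*} [Preorder α] [ConditionallyCompleteLattice β]
    (g : α ↪o β) {s : Set α} (hs : s.Nonempty) (hbdd : BddBelow (g '' s)) {x : α}
    (hx : g x = sInf (g '' s)) : IsGLB s x :=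
  IsGLB.of_image g.le_iff_le (hx ▸ isGLB_csInf (hs.image g) hbdd)

theorem IsGLB.subtype_le_val_image {T : Type*} [Preorder T] {τ : T}
    {s : Set {σ : T // σ ≤ τ}} {x : {σ : T // σ ≤ τ}} (hs : s.Nonempty) (h : IsGLB s x) :
    IsGLB (Subtype.val '' s) (x : T) := by
  refine ⟨fun _ ⟨y, hy, hyx⟩ => hyx ▸ h.1 hy, fun z hz => ?_⟩
  obtain ⟨y, hy⟩ := hs
  have hzτ : z ≤ τ := (hz ⟨y, hy, rfl⟩).trans y.2
  have hzx : (⟨z, hzτ⟩ : {σ : T // σ ≤ τ}) ≤ x := h.2 fun w hw => hz ⟨w, hw, rfl⟩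
  exact hzx

theorem lowerBounds_image_glb_left {T : Type*} [Preorder T] (w : T → T → T) {τ : T}
    (hw : ∀ σ, IsGLB {τ, σ} (w τ σ)) {S : Set T} (hτ : τ ∈ S) :
    lowerBounds ((w τ ·) '' S) = lowerBounds S := by
  ext x
  constructor
  · intro hx σ hσ
    exact (hx ⟨σ, hσ, rfl⟩).trans ((hw σ).1 (Set.mem_insert_of_mem τ rfl))
  · rintro hx _ ⟨σ, hσ, rfl⟩
    exact (hw σ).2 (by rintro y (rfl | rfl) <;> [exact hx hτ; exact hx hσ])

theorem infimum_via_interval_isomorphism_general {T : Type*} [PartialOrder T]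
    (wedge : T → T → T) (hwedge : ∀ a b : T, IsGLB {a, b} (wedge a b))
    (S : Set T) (τ : T) (hτS : τ ∈ S)
    (a b : ℝ) (Φ : {σ : T // σ ≤ τ} ≃o Set.Icc a b)
    (σ₀ : T) (hσ₀ : σ₀ ≤ τ)
    (hval : (Φ ⟨σ₀, hσ₀⟩ : ℝ) =
      sInf {c : ℝ | ∃ σ ∈ S,
        ((Φ ⟨wedge τ σ, (hwedge τ σ).1 (Set.mem_insert τ {σ})⟩ : ℝ) = c)}) :
    IsGLB S σ₀ := by
  let g : {σ : T // σ ≤ τ} ↪o ℝ := Φ.toOrderEmbedding.trans (OrderEmbedding.subtype _)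
  let s : Set {σ : T // σ ≤ τ} :=
    (fun σ => ⟨wedge τ σ, (hwedge τ σ).1 (Set.mem_insert τ {σ})⟩) '' S
  have hs : s.Nonempty := ⟨_, τ, hτS, rfl⟩
  have hbdd : BddBelow (g '' s) := ⟨a, by rintro _ ⟨y, -, rfl⟩; exact (Φ y).2.1⟩
  have hglb : IsGLB s ⟨σ₀, hσ₀⟩ :=
    IsGLB.of_map_eq_csInf g hs hbdd (by rw [Set.image_image]; exact hval)
  have hglbT := hglb.subtype_le_val_image hs
  rw [Set.image_image] at hglbT
  unfold IsGLB at hglbT ⊢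
  rwa [← lowerBounds_image_glb_left wedge (hwedge τ) hτS]

/-- in a poset with smallest element, down-sets order-isomorphic
to real intervals and pairwise infima, for nonempty `S` and `τ ∈ S`, with
`Φ_τ : [τ₀,τ] ≃o [a,b] ⊆ ℝ`, the element `σ₀ = Φ_τ⁻¹(inf {Φ_τ(τ∧σ) : σ ∈ S})`
is the infimum of `S`. -/
theorem infimum_via_interval_isomorphism {T : Type*} [PartialOrder T]
    (τ₀ : T) (hroot : ∀ t : T, τ₀ ≤ t)
    (hI : ∀ τ : T, ∃ s : Set ℝ, s.OrdConnected ∧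
      Nonempty ({σ : T // σ ≤ τ} ≃o s))
    (wedge : T → T → T) (hwedge : ∀ a b : T, IsGLB {a, b} (wedge a b))
    (S : Set T) (τ : T) (hτS : τ ∈ S)
    (a b : ℝ) (Φ : {σ : T // σ ≤ τ} ≃o Set.Icc a b)
    (σ₀ : T) (hσ₀ : σ₀ ≤ τ)
    (hval : (Φ ⟨σ₀, hσ₀⟩ : ℝ) =
      sInf {c : ℝ | ∃ σ ∈ S,
        ((Φ ⟨wedge τ σ, (hwedge τ σ).1 (Set.mem_insert τ {σ})⟩ : ℝ) = c)}) :
    IsGLB S σ₀ :=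
  infimum_via_interval_isomorphism_general wedge hwedge S τ hτS a b Φ σ₀ hσ₀ hval
end
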